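/- In a flat FRW universe with phantom fluid p = wρ, w < -1, and Friedmann equation 3H² = ρ with ρ = ρ₀ a^{-3(w+1)}, ρ₀ > 0, an initially expanding solution reaches a big rip: the scale factor a(t) tends to +∞ in finite time. -/
import Mathlib


open Set Filter

/-- Phantom big rip: for `w < -1`, the expanding solution of
`a' = √(ρ₀/3) · a^{1 - 3(w+1)/2}` with `a(0) = a₀ > 0` blows up at the finite time
`t_s = a₀^{-p}/(√(ρ₀/3)·p)` where `p = -3(w+1)/2 > 0`: `a(t) → +∞` as `t → t_s⁻`. -/
theorem phantom_big_rip
    (w ρ₀ a₀ : ℝ) (hw : w < -1) (hρ : 0 < ρ₀) (ha₀ : 0 < a₀)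
    (p : ℝ) (hp : p = -(3 * (w + 1)) / 2)
    (t_s : ℝ) (hts : t_s = a₀ ^ (-p) / (Real.sqrt (ρ₀ / 3) * p))
    (a : ℝ → ℝ) (h0 : a 0 = a₀)
    (hpos : ∀ t ∈ Ico (0:ℝ) t_s, 0 < a t)
    (hode : ∀ t ∈ Ico (0:ℝ) t_s,
      HasDerivAt a (Real.sqrt (ρ₀ / 3) * a t ^ (1 - 3 * (w + 1) / 2)) t) :
    Tendsto a (nhdsWithin t_s (Iio t_s)) atTop := by
  set c := Real.sqrt (ρ₀ / 3) with hc_def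
  have hc : 0 < c := Real.sqrt_pos.mpr (by linarith)
  have hp_pos : 0 < p := by rw [hp]; linarith
  have ha₀p : (0:ℝ) < a₀ ^ (-p) := Real.rpow_pos_of_pos ha₀ _
  have hts_pos : 0 < t_s := by rw [hts]; positivity
  have hcpts : c * p * t_s = a₀ ^ (-p) := by
    rw [hts]; field_simp
  -- the exponent in the ODE equals 1 + p
  have hexp : 1 - 3 * (w + 1) / 2 = 1 + p := by rw [hp]; ring
  -- key identity: a t ^ (-p) = c * p * (t_s - t)
  have hkey : ∀ t ∈ Ico (0:ℝ) t_s, a t ^ (-p) = c * p * (t_s - t) := by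
    intro t ht
    obtain ⟨ht0, htts⟩ := ht
    -- derivative of F s = a s ^ (-p) is -(c*p) on Ico 0 t
    have hF : ∀ x ∈ Ico (0:ℝ) t_s,
        HasDerivAt (fun s => a s ^ (-p)) (-(c * p)) x := by
      intro x hx
      have hax : 0 < a x := hpos x hx
      have hd := (hode x hx).rpow_const (p := -p) (Or.inl (ne_of_gt hax))
      convert hd using 1
      rw [hexp]
      have h1 : a x ^ (1 + p) * a x ^ (-p - 1) = 1 := by
        rw [← Real.rpow_add hax, show 1 + p + (-p - 1) = (0:ℝ) by ring, Real.rpow_zero]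
      calc -(c * p) = c * (a x ^ (1 + p) * a x ^ (-p - 1)) * (-p) := by
            rw [h1]; ring
        _ = c * a x ^ (1 + p) * -p * a x ^ (-p - 1) := by ring
    have hG : ∀ x : ℝ, HasDerivAt (fun s => a₀ ^ (-p) - c * p * s) (-(c * p)) x := by
      intro x
      simpa using ((hasDerivAt_id x).const_mul (c * p)).const_sub (a₀ ^ (-p))
    have hsub : Icc (0:ℝ) t ⊆ Ico (0:ℝ) t_s := fun x hx =>
      ⟨hx.1, lt_of_le_of_lt hx.2 htts⟩
    have heq := eq_of_has_deriv_right_eq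
      (f' := fun _ => -(c * p)) (a := 0) (b := t)
      (fun x hx => ((hF x (hsub (Ico_subset_Icc_self hx))).hasDerivWithinAt))
      (fun x hx => ((hG x).hasDerivWithinAt))
      (fun x hx => (hF x (hsub hx)).continuousAt.continuousWithinAt)
      (fun x hx => (hG x).continuousAt.continuousWithinAt)
      (by simp [h0])
    have := heq t ⟨ht0, le_refl t⟩
    rw [this]
    rw [← hcpts]; ring
  -- hence a t = (c*p*(t_s - t)) ^ (-1/p) on Ico 0 t_s
  have hrep : ∀ t ∈ Ico (0:ℝ) t_s, a t = (c * p * (t_s - t)) ^ (-1/p) := by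
    intro t ht
    have hat : 0 < a t := hpos t ht
    rw [← hkey t ht, ← Real.rpow_mul hat.le,
      show -p * (-1/p) = (1:ℝ) by field_simp, Real.rpow_one]
  -- the limit
  have h1 : Tendsto (fun t => c * p * (t_s - t)) (nhdsWithin t_s (Iio t_s)) (nhdsWithin 0 (Ioi 0)) := by
    apply tendsto_nhdsWithin_of_tendsto_nhds_of_eventually_within
    · have : Tendsto (fun t => c * p * (t_s - t)) (nhds t_s) (nhds (c * p * (t_s - t_s))) := by
        exact (tendsto_const_nhds.sub tendsto_id).const_mul (c * p)
      simpa using this.mono_left nhdsWithin_le_nhds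
    · filter_upwards [self_mem_nhdsWithin] with t ht
      have h1 : t < t_s := ht
      have h2 : 0 < t_s - t := by linarith
      exact mul_pos (mul_pos hc hp_pos) h2
  have h2 : Tendsto (fun x : ℝ => x ^ (-1/p)) (nhdsWithin 0 (Ioi 0)) atTop := by
    have := (tendsto_rpow_atTop (y := 1/p) (by positivity)).comp tendsto_inv_nhdsGT_zero
    apply this.congr'
    filter_upwards [self_mem_nhdsWithin] with x hx
    have hx0 : 0 < x := hx
    simp only [Function.comp]
    rw [← Real.rpow_neg_one x, ← Real.rpow_mul hx0.le]
    congr 1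
    ring
  have hmain : Tendsto (fun t => (c * p * (t_s - t)) ^ (-1/p)) (nhdsWithin t_s (Iio t_s)) atTop :=
    h2.comp h1
  apply hmain.congr'
  filter_upwards [Ioo_mem_nhdsLT_of_mem (by constructor <;> [exact hts_pos; exact le_refl t_s] :
    t_s ∈ Ioc 0 t_s)] with t ht
  exact (hrep t ⟨ht.1.le, ht.2⟩).symm
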